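/- arXiv:0806.1926 — 5 statements merged into one kernel-verified Lean document; each statement's English description precedes it below -/
import Mathlib

section
/- If B is a primitive (2n+2)-th root of unity with B ≠ ±1, then d = B + B^{-1} is a simple root of the Chebyshev polynomial Δ_n. -/
/-!
`Δ_n` is Mathlib's `Chebyshev.S ℂ n`. For `x * y = 1` one has
`(x - y) Δ_n(x + y) = x^(n+1) - y^(n+1)`; with `x = B`, `y = B⁻¹` the right side vanishes because
`B^(2n+2) = 1`, while `B - B⁻¹ ≠ 0` because `B ≠ ±1`. The root is simple: by the identity
`(X² - 4) Δ_n' = n X Δ_n - 2(n+1) Δ_{n-1}`, a common zero of `Δ_n` and `Δ_n'` would be a zero of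
`Δ_{n-1}`, which the Cassini-type identity `Δ_{n-1}² + Δ_n² - X Δ_{n-1} Δ_n = 1` rules out.
-/

open Polynomial

/-- The Chebyshev-type polynomials `Δ_n`. -/
noncomputable def cheb : ℕ → Polynomial ℂ
  | 0 => 1
  | 1 => X
  | (n + 2) => X * cheb (n + 1) - cheb n

theorem cheb_eq_chebyshev_S : ∀ n : ℕ, cheb n = Chebyshev.S ℂ n
  | 0 => by simp [cheb]
  | 1 => by simp [cheb]
  | n + 2 => by
    rw [cheb, cheb_eq_chebyshev_S (n + 1), cheb_eq_chebyshev_S n]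
    push_cast
    exact (Chebyshev.S_add_two ℂ n).symm

namespace Polynomial.Chebyshev

variable {R : Type*} [CommRing R]

theorem sub_mul_S_eval_add_of_mul_eq_one {x y : R} (h : x * y = 1) :
    ∀ n : ℕ, (x - y) * (S R n).eval (x + y) = x ^ (n + 1) - y ^ (n + 1)
  | 0 => by simp
  | 1 => by
    simp only [Nat.cast_one, S_one, eval_X]
    ring
  | n + 2 => by
    have ih₁ := sub_mul_S_eval_add_of_mul_eq_one h (n + 1)
    have ih₀ := sub_mul_S_eval_add_of_mul_eq_one h n
    push_cast at ih₁ ih₀ ⊢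
    rw [S_add_two, eval_sub, eval_mul, eval_X]
    linear_combination (x + y) * ih₁ - ih₀ + (x ^ (n + 1) - y ^ (n + 1)) * h

theorem X_sq_sub_four_mul_derivative_S (n : ℤ) :
    (X ^ 2 - 4) * derivative (S R n) =
      (n : R[X]) * X * S R n - 2 * ((n : R[X]) + 1) * S R (n - 1) := by
  induction n using Polynomial.Chebyshev.induct with
  | zero => simp
  | one =>
    simp only [S_one, derivative_X, mul_one, Int.cast_one, one_mul, sub_self, S_zero]
    ring
  | add_two n ih₁ ih₀ =>
    rw [S_add_two, derivative_sub, derivative_mul, derivative_X,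
      show (n : ℤ) + 2 - 1 = n + 1 by ring]
    rw [add_sub_cancel_right] at ih₁
    push_cast at ih₁ ih₀ ⊢
    linear_combination X * ih₁ - ih₀ + 2 * ((n : R[X]) + 1) * S_sub_one R n
  | neg_add_one n ih₀ ih₁ =>
    have hd := S_sub_one R (-n - 1)
    rw [sub_add_cancel] at hd
    rw [S_sub_one, derivative_sub, derivative_mul, derivative_X]
    rw [add_sub_cancel_right] at ih₁
    push_cast at ih₁ ih₀ ⊢
    linear_combination X * ih₀ - ih₁ - 2 * (n : R[X]) * hd - 2 * X * S_sub_one R (-n)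

theorem derivative_S_eval_ne_zero_of_isRoot [IsDomain R] {n : ℤ} {x : R}
    (hx : (S R n).IsRoot x) (hn : (2 * (n + 1) : R) ≠ 0) :
    (derivative (S R n)).eval x ≠ 0 := by
  intro hx'
  have hcassini : (S R (n - 1)).eval x ^ 2 = 1 := by
    have h := congrArg (eval x) (S_sq_add_S_sq R (n - 1))
    simp only [sub_add_cancel, eval_sub, eval_add, eval_pow, eval_mul, eval_X, eval_one,
      hx.eq_zero] at h
    linear_combination h
  have hderiv := congrArg (eval x) (X_sq_sub_four_mul_derivative_S (R := R) n)
  simp only [eval_mul, eval_sub, eval_add, eval_pow, eval_X, eval_ofNat, eval_one, eval_intCast,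
    hx.eq_zero, hx'] at hderiv
  have : (2 * (n + 1) : R) * (S R (n - 1)).eval x = 0 := by linear_combination hderiv
  exact hn ((mul_eq_zero.1 this).resolve_right fun h ↦ by simp [h] at hcassini)

end Polynomial.Chebyshev

theorem cheb_simple_root (n : ℕ) (B : ℂ) (hB : IsPrimitiveRoot B (2 * n + 2))
    (hB1 : B ≠ 1) (hB2 : B ≠ -1) :
    (X - C (B + B⁻¹)) ∣ cheb n ∧ ¬ ((X - C (B + B⁻¹)) ^ 2 ∣ cheb n) := by
  have hB0 : B ≠ 0 := hB.ne_zero (by omega)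
  have hB_sub_inv : B - B⁻¹ ≠ 0 := by
    refine sub_ne_zero.2 fun h ↦ ?_
    rcases mul_self_eq_one_iff.1 ((congrArg (B * ·) h).trans (mul_inv_cancel₀ hB0)) with h1 | h1
    exacts [hB1 h1, hB2 h1]
  have hpow : B ^ (n + 1) = B⁻¹ ^ (n + 1) := by
    rw [inv_pow]
    exact eq_inv_of_mul_eq_one_left (by rw [← pow_add, ← hB.pow_eq_one]; ring_nf)
  have hroot : (Chebyshev.S ℂ n).IsRoot (B + B⁻¹) := by
    have h := Chebyshev.sub_mul_S_eval_add_of_mul_eq_one (mul_inv_cancel₀ hB0) n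
    rw [hpow, sub_self] at h
    exact (mul_eq_zero.1 h).resolve_left hB_sub_inv
  rw [cheb_eq_chebyshev_S]
  refine ⟨dvd_iff_isRoot.2 hroot, fun hsq ↦ ?_⟩
  refine Chebyshev.derivative_S_eval_ne_zero_of_isRoot hroot ?_ ?_
  · rw [Int.cast_natCast]
    exact mul_ne_zero two_ne_zero n.cast_add_one_ne_zero
  · have h := pow_sub_one_dvd_derivative_of_pow_dvd hsq
    rwa [Nat.add_one_sub_one, pow_one, dvd_iff_isRoot] at h
end

section
/- If m + 1 divides ℓ + 1 (with m < ℓ), then every complex root of the Chebyshev polynomial Δ_m is also a root of Δ_ℓ. -/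
/-!
`Δ_n` is the Vieta–Fibonacci polynomial `S_n`. The addition formula
`S_{a+b} = S_a S_b - S_{a-1} S_{b-1}` with `a = nk`, `b = n - 1` shows by induction on `k` that
`S_{n-1}` divides `S_{nk-1}`; take `n = m + 1` and `nk = ℓ + 1`.
-/

open Polynomial

namespace Polynomial.Chebyshev

variable (R : Type*) [CommRing R]

theorem S_add (m n : ℤ) : S R (m + n) = S R m * S R n - S R (m - 1) * S R (n - 1) := by
  induction n using Chebyshev.induct with
  | zero => simp
  | one => simpa [mul_comm] using S_add_one R m
  | add_two n ih₁ ih₀ =>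
    have h : S R (m + (n + 2)) = X * S R (m + (n + 1)) - S R (m + n) := by
      simpa only [add_assoc] using S_add_two R (m + n)
    have h' : S R (n + 2 - 1) = X * S R n - S R (n - 1) := by
      rw [← S_add_one]; congr 1; ring
    rw [h, ih₁, ih₀, h', add_sub_cancel_right, S_add_two]
    ring
  | neg_add_one n ih₀ ih₁ =>
    have h : S R (m + (-n - 1)) = X * S R (m + -n) - S R (m + (-n + 1)) := by
      simpa only [add_sub_assoc, add_assoc] using S_sub_one R (m + -n)
    have h' : S R (-n - 1 - 1) = X * S R (-n - 1) - S R (-n) := by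
      simpa only [sub_add_cancel] using S_sub_one R (-n - 1)
    rw [h, ih₀, ih₁, h', add_sub_cancel_right, S_sub_one R (-n)]
    ring

theorem S_sub_one_dvd_S_mul_sub_one (n : ℤ) (k : ℕ) : S R (n - 1) ∣ S R (n * k - 1) := by
  induction k with
  | zero => simp
  | succ k ih =>
    rw [show n * (k + 1 : ℕ) - 1 = n * k + (n - 1) by push_cast; ring, S_add]
    exact dvd_sub (dvd_mul_left _ _) (dvd_mul_of_dvd_left ih _)

end Polynomial.Chebyshev

open Polynomial.Chebyshev

theorem cheb_eq_S (n : ℕ) : cheb n = S ℂ n := by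
  induction n using Nat.twoStepInduction with
  | zero => simp [cheb]
  | one => simp [cheb]
  | more n ih₀ ih₁ => simp [cheb, ih₀, ih₁]

theorem cheb_root_of_divides_general (m ℓ : ℕ) (hdvd : (m + 1) ∣ (ℓ + 1))
    (d : ℂ) (hd : (cheb m).eval d = 0) : (cheb ℓ).eval d = 0 := by
  obtain ⟨k, hk⟩ := hdvd
  have hℓ : (ℓ : ℤ) = (m + 1 : ℕ) * k - 1 := by rw [← Nat.cast_mul, ← hk]; push_cast; ring
  rw [cheb_eq_S] at hd ⊢
  rw [hℓ]
  refine eval_eq_zero_of_dvd_of_eval_eq_zero (S_sub_one_dvd_S_mul_sub_one ℂ _ k) ?_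
  simpa using hd

theorem cheb_root_of_divides (m ℓ : ℕ) (hmℓ : m < ℓ) (hdvd : (m + 1) ∣ (ℓ + 1))
    (d : ℂ) (hd : (cheb m).eval d = 0) : (cheb ℓ).eval d = 0 :=
  cheb_root_of_divides_general m ℓ hdvd d hd
end

section
/- Let A be a primitive 4r-th root of unity, r ≥ 3, and for 0 ≤ i, j ≤ r-2 define s̃_{ij} = (-1)^{i+j} [(i+1)(j+1)]_A, where [m]_A = (A^{2m} - A^{-2m})/(A^2 - A^{-2}). Then the (r-1)×(r-1) matrix s̃ satisfies s̃^2 = (-2r/(A^2 - A^{-2})^2) · Id; in particular s̃ is nonsingular. -/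
/-!
With `q = A²`, a primitive `2r`-th root of unity, `[m]_A = (q^m - q⁻ᵐ) / (q - q⁻¹)`. In
`(s̃²)_{ik}` the signs combine to `(-1)^{i+k}`, leaving `∑_{n=1}^{r-1} (yⁿ - y⁻ⁿ)(zⁿ - z⁻ⁿ)` with
`y = q^{i+1}`, `z = q^{k+1}`. This is the difference of the sums `∑_{n=1}^{r-1} (xⁿ + x⁻ⁿ)` at
`x = yz` and `x = y/z`; by the geometric series such a sum is `-1 - x^r` when `x ≠ 1` and
`x^{2r} = 1`, and `2(r - 1)` when `x = 1`. Since `(yz)^r = (y/z)^r`, the off-diagonal entries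
vanish, and the diagonal ones are `-2r / (q - q⁻¹)²`.
-/

open Finset

/-- The quantum integer `[m]_A = (A^{2m} - A^{-2m})/(A^2 - A^{-2})`. -/
noncomputable def qint (A : ℂ) (m : ℤ) : ℂ :=
  (A ^ (2 * m) - A ^ (-(2 * m))) / (A ^ (2 : ℤ) - A ^ (-2 : ℤ))

section SignedSineMatrix

variable {K : Type*} [Field K]

theorem sum_range_pow_add_inv_pow {x : K} {r : ℕ} (hr : 0 < r) (hx : x ≠ 1)
    (hx2r : x ^ (2 * r) = 1) :
    ∑ n ∈ range (r - 1), (x ^ (n + 1) + (x ^ (n + 1))⁻¹) = -x ^ r - 1 := by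
  have hx0 : x ≠ 0 := by rintro rfl; simp [hr.ne'] at hx2r
  have hsplit : ∀ y : K, ∑ n ∈ range (r - 1), y ^ (n + 1) = (∑ n ∈ range r, y ^ n) - 1 := by
    intro y
    obtain ⟨s, rfl⟩ := Nat.exists_eq_add_of_lt hr
    simp [sum_range_succ']
  have hinv : x⁻¹ ^ r = x ^ r := by
    rw [inv_pow]
    exact inv_eq_of_mul_eq_one_right (by rw [← pow_add, ← two_mul, hx2r])
  have hgeom := geom_sum_mul x r
  have hgeom_inv := geom_sum_mul x⁻¹ r
  rw [hinv] at hgeom_inv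
  simp only [← inv_pow]
  rw [sum_add_distrib, hsplit, hsplit]
  apply mul_right_cancel₀ (sub_ne_zero.mpr hx)
  linear_combination hgeom - x * hgeom_inv + (∑ n ∈ range r, x⁻¹ ^ n) * mul_inv_cancel₀ hx0

theorem pow_sub_inv_mul_pow_sub_inv {y z : K} (hy : y ≠ 0) (hz : z ≠ 0) (n : ℕ) :
    (y ^ n - (y ^ n)⁻¹) * (z ^ n - (z ^ n)⁻¹) =
      ((y * z) ^ n + ((y * z) ^ n)⁻¹) - ((y * z⁻¹) ^ n + ((y * z⁻¹) ^ n)⁻¹) := by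
  simp only [mul_pow, inv_pow, mul_inv, inv_inv]
  field_simp
  ring

/- For `q = exp (π i / r)` the summands are `-4 sin (π a n / r) sin (π c n / r)`: this is the
orthogonality of the discrete sine transform. -/
theorem IsPrimitiveRoot.sum_range_sine_mul_sine {q : K} {r a c : ℕ}
    (hq : IsPrimitiveRoot q (2 * r)) (ha : 0 < a) (har : a < r) (hc : 0 < c) (hcr : c < r) :
    ∑ n ∈ range (r - 1), (q ^ (a * (n + 1)) - (q ^ (a * (n + 1)))⁻¹) *
        (q ^ (c * (n + 1)) - (q ^ (c * (n + 1)))⁻¹) = if a = c then (-2 * r : K) else 0 := by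
  have hr : 0 < r := by omega
  have hq0 : q ≠ 0 := hq.ne_zero (by omega)
  have hroot : ∀ m : ℕ, (q ^ m) ^ (2 * r) = 1 := fun m => by
    rw [← pow_mul, mul_comm, pow_mul, hq.pow_eq_one, one_pow]
  have hsum_ne_one : q ^ a * q ^ c ≠ 1 := by
    rw [← pow_add]; exact hq.pow_ne_one_of_pos_of_lt (by omega) (by omega)
  simp only [pow_mul, pow_sub_inv_mul_pow_sub_inv (pow_ne_zero a hq0) (pow_ne_zero c hq0),
    sum_sub_distrib]
  rw [sum_range_pow_add_inv_pow hr hsum_ne_one (by rw [← pow_add]; exact hroot _)]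
  split_ifs with hac
  · subst hac
    rw [mul_inv_cancel₀ (pow_ne_zero a hq0), ← sq, ← pow_mul, hroot]
    simp only [one_pow, inv_one, sum_const, card_range, nsmul_eq_mul, Nat.cast_sub hr]
    ring
  · have hdiff_ne_one : q ^ a * (q ^ c)⁻¹ ≠ 1 := by
      rw [Ne, mul_inv_eq_one₀ (pow_ne_zero c hq0)]
      exact fun h => hac (hq.pow_inj (by omega) (by omega) h)
    have hinv : ((q ^ c) ^ r)⁻¹ = (q ^ c) ^ r :=
      inv_eq_of_mul_eq_one_right (by rw [← pow_add, ← two_mul, hroot])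
    rw [sum_range_pow_add_inv_pow hr hdiff_ne_one
      (by rw [mul_pow, inv_pow, hroot, hroot, inv_one, mul_one]), mul_pow, mul_pow, inv_pow, hinv]
    ring

theorem neg_one_pow_add_mul_neg_one_pow_add (i j k : ℕ) :
    (-1 : K) ^ (i + j) * (-1) ^ (j + k) = (-1) ^ (i + k) := by
  rw [← pow_add, show i + j + (j + k) = i + k + 2 * j by ring, pow_add, pow_mul, neg_one_sq,
    one_pow, mul_one]

/-- The matrix `s̃` written in terms of `q = A²`. -/
def signedSineMatrix (q : K) (N : ℕ) : Matrix (Fin N) (Fin N) K :=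
  Matrix.of fun i j => (-1) ^ ((i : ℕ) + j) *
    ((q ^ (((i : ℕ) + 1) * ((j : ℕ) + 1)) - (q ^ (((i : ℕ) + 1) * ((j : ℕ) + 1)))⁻¹) / (q - q⁻¹))

theorem IsPrimitiveRoot.signedSineMatrix_mul_self {q : K} {r : ℕ}
    (hq : IsPrimitiveRoot q (2 * r)) :
    signedSineMatrix q (r - 1) * signedSineMatrix q (r - 1) =
      ((-2 * r : K) / (q - q⁻¹) ^ 2) • 1 := by
  ext i k
  rw [Matrix.mul_apply, Matrix.smul_apply, Matrix.one_apply, smul_eq_mul]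
  calc ∑ j, signedSineMatrix q (r - 1) i j * signedSineMatrix q (r - 1) j k
      = (-1) ^ ((i : ℕ) + k) / (q - q⁻¹) ^ 2 * ∑ n ∈ range (r - 1),
          (q ^ (((i : ℕ) + 1) * (n + 1)) - (q ^ (((i : ℕ) + 1) * (n + 1)))⁻¹) *
            (q ^ (((k : ℕ) + 1) * (n + 1)) - (q ^ (((k : ℕ) + 1) * (n + 1)))⁻¹) := by
        rw [← Fin.sum_univ_eq_sum_range, mul_sum]
        refine sum_congr rfl fun j _ => ?_
        simp only [signedSineMatrix, Matrix.of_apply]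
        rw [mul_comm ((j : ℕ) + 1), ← neg_one_pow_add_mul_neg_one_pow_add (i : ℕ) j k]
        -- otherwise `ring` expands `(q - q⁻¹) ^ 2` under the inverse
        generalize q - q⁻¹ = d
        ring
    _ = (-2 * r / (q - q⁻¹) ^ 2) * if i = k then 1 else 0 := by
        rw [hq.sum_range_sine_mul_sine (by omega) (by omega) (by omega) (by omega)]
        by_cases hik : i = k
        · rw [if_pos (by rw [hik]), if_pos hik, hik, ← two_mul, pow_mul, neg_one_sq, one_pow]
          ring
        · rw [if_neg (by omega), if_neg hik, mul_zero, mul_zero]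

theorem IsPrimitiveRoot.sub_inv_ne_zero {q : K} {k : ℕ}
    (hq : IsPrimitiveRoot q k) (hk : 2 < k) : q - q⁻¹ ≠ 0 := by
  intro h
  apply hq.pow_ne_one_of_pos_of_lt two_ne_zero hk
  rw [sq]; nth_rewrite 2 [sub_eq_zero.mp h]
  exact mul_inv_cancel₀ (hq.ne_zero (by omega))

end SignedSineMatrix

theorem qint_natCast (A : ℂ) (m : ℕ) :
    qint A m = ((A ^ 2) ^ m - ((A ^ 2) ^ m)⁻¹) / (A ^ 2 - (A ^ 2)⁻¹) := by
  rw [qint, zpow_neg, zpow_neg, zpow_mul, zpow_ofNat, zpow_natCast]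

theorem isUnit_of_mul_self_eq_smul_one {K R : Type*} [Field K] [Ring R] [Algebra K R] {a : R}
    {c : K} (hc : c ≠ 0) (h : a * a = c • 1) : IsUnit a :=
  isUnit_iff_exists.mpr ⟨c⁻¹ • a,
    by rw [mul_smul_comm, h, smul_smul, inv_mul_cancel₀ hc, one_smul],
    by rw [smul_mul_assoc, h, smul_smul, inv_mul_cancel₀ hc, one_smul]⟩

theorem smatrix_nonsingular (r : ℕ) (hr : 3 ≤ r) (A : ℂ)
    (hA : IsPrimitiveRoot A (4 * r))
    (S : Matrix (Fin (r - 1)) (Fin (r - 1)) ℂ)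
    (hS : ∀ i j : Fin (r - 1),
      S i j = (-1 : ℂ) ^ ((i : ℕ) + (j : ℕ)) *
        qint A ((((i : ℕ) + 1) * ((j : ℕ) + 1) : ℕ))) :
    S * S = ((-2 * r : ℂ) / (A ^ (2 : ℤ) - A ^ (-2 : ℤ)) ^ 2) • 1 ∧ IsUnit S := by
  have hq : IsPrimitiveRoot (A ^ 2) (2 * r) := hA.pow (by omega) (by ring)
  have hS_eq : S = signedSineMatrix (A ^ 2) (r - 1) := by
    ext i j
    rw [hS, qint_natCast, signedSineMatrix, Matrix.of_apply]
  have hden : A ^ (2 : ℤ) - A ^ (-2 : ℤ) = A ^ 2 - (A ^ 2)⁻¹ := by rw [zpow_neg, zpow_ofNat]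
  have hsq : S * S = ((-2 * r : ℂ) / (A ^ (2 : ℤ) - A ^ (-2 : ℤ)) ^ 2) • 1 := by
    rw [hS_eq, hden, hq.signedSineMatrix_mul_self]
  refine ⟨hsq, isUnit_of_mul_self_eq_smul_one ?_ hsq⟩
  rw [hden]
  exact div_ne_zero (mul_ne_zero (by norm_num) (by exact_mod_cast (by omega : r ≠ 0)))
    (pow_ne_zero 2 (hq.sub_inv_ne_zero (by omega)))
end

section
/- Let r ≥ 3 be odd and A a primitive 2r-th or r-th root of unity, and for 0 ≤ i, j ≤ r-2 define s̃_{ij} = (-1)^{i+j}[(i+1)(j+1)]_A. Then s̃_{(r-2-i) j} = s̃_{ij} for all i, j; in particular the matrix s̃ is singular. -/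
lemma qint_neg (A : ℂ) (m : ℤ) : qint A (-m) = -qint A m := by
  unfold qint
  rw [mul_neg, neg_neg, ← neg_div, neg_sub]

lemma qint_periodic {A : ℂ} (hA0 : A ≠ 0) {k : ℕ} (hA : A ^ (2 * k) = 1) :
    Function.Periodic (qint A) k := by
  intro m
  have hk : A ^ (2 * (k : ℤ)) = 1 := by exact_mod_cast hA
  unfold qint
  rw [mul_add, neg_add, zpow_add₀ hA0, zpow_add₀ hA0, zpow_neg A (2 * (k : ℤ)), hk, inv_one,
    mul_one, mul_one]

lemma qint_sub_mul {A : ℂ} (hA0 : A ≠ 0) {r : ℕ} (hA : A ^ (2 * r) = 1) {i : ℕ} (hi : i ≤ r)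
    (j : ℕ) : qint A ((r - i) * j : ℕ) = -qint A (i * j : ℕ) := by
  have hcast : (((r - i) * j : ℕ) : ℤ) = (j : ℤ) * (r : ℤ) - ((i * j : ℕ) : ℤ) := by
    push_cast [Nat.cast_sub hi]
    ring
  rw [hcast, (qint_periodic hA0 hA).nat_mul_sub_eq, qint_neg]

lemma neg_one_pow_eq_neg_of_odd_add {R : Type*} [Ring R] {m n : ℕ} (h : Odd (m + n)) :
    (-1 : R) ^ m = -(-1 : R) ^ n := by
  rcases Nat.even_or_odd n with hn | hn
  · rw [((Nat.odd_add.mp h).mpr hn).neg_one_pow, hn.neg_one_pow]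
  · rw [((Nat.odd_add'.mp h).mp hn).neg_one_pow, hn.neg_one_pow, neg_neg]

lemma neg_one_pow_mul_qint_rev {A : ℂ} (hA0 : A ≠ 0) {r : ℕ} (hodd : Odd r)
    (hA : A ^ (2 * r) = 1) {i : ℕ} (hi : i < r - 1) (j : ℕ) :
    (-1 : ℂ) ^ (r - 1 - (i + 1) + j) * qint A ((r - 1 - (i + 1) + 1) * (j + 1) : ℕ) =
      (-1 : ℂ) ^ (i + j) * qint A ((i + 1) * (j + 1) : ℕ) := by
  have hsign : (-1 : ℂ) ^ (r - 1 - (i + 1) + j) = -(-1 : ℂ) ^ (i + j) :=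
    neg_one_pow_eq_neg_of_odd_add (by obtain ⟨t, rfl⟩ := hodd; exact ⟨t + j - 1, by omega⟩)
  rw [hsign, show r - 1 - (i + 1) + 1 = r - (i + 1) by omega, qint_sub_mul hA0 hA (by omega)]
  ring

lemma Matrix.det_eq_zero_of_row_rev_eq {R : Type*} [CommRing R] {n : ℕ} (hn : 2 ≤ n)
    (M : Matrix (Fin n) (Fin n) R) (h : ∀ i, M i.rev = M i) : M.det = 0 := by
  let i₀ : Fin n := ⟨0, by omega⟩
  refine M.det_zero_of_row_eq (i := i₀.rev) (j := i₀) ?_ (h i₀)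
  rw [ne_eq, Fin.ext_iff, Fin.val_rev]
  simp only [i₀]
  omega

theorem smatrix_singular_odd_general (r : ℕ) (hr : 3 ≤ r) (hodd : Odd r) (A : ℂ)
    (hA : IsPrimitiveRoot A (2 * r) ∨ IsPrimitiveRoot A r)
    (S : Matrix (Fin (r - 1)) (Fin (r - 1)) ℂ)
    (hS : ∀ i j : Fin (r - 1),
      S i j = (-1 : ℂ) ^ ((i : ℕ) + (j : ℕ)) *
        qint A ((((i : ℕ) + 1) * ((j : ℕ) + 1) : ℕ))) :
    (∀ i j : Fin (r - 1), S (Fin.rev i) j = S i j) ∧ S.det = 0 := by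
  have hA0 : A ≠ 0 := by
    rcases hA with h | h <;> exact h.ne_zero (by omega)
  have hA2r : A ^ (2 * r) = 1 := by
    rcases hA with h | h
    · exact h.pow_eq_one
    · rw [mul_comm, pow_mul, h.pow_eq_one, one_pow]
  have hrev : ∀ i j : Fin (r - 1), S i.rev j = S i j := fun i j => by
    rw [hS, hS, Fin.val_rev]
    exact neg_one_pow_mul_qint_rev hA0 hodd hA2r i.isLt j
  exact ⟨hrev, S.det_eq_zero_of_row_rev_eq (by omega) fun i => funext (hrev i)⟩

theorem smatrix_singular_odd (r : ℕ) (hr : 3 ≤ r) (hodd : Odd r) (A : ℂ)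
    (hA : IsPrimitiveRoot A (2 * r) ∨ IsPrimitiveRoot A r)
    (hA4 : A ^ (4 : ℕ) ≠ 1)
    (S : Matrix (Fin (r - 1)) (Fin (r - 1)) ℂ)
    (hS : ∀ i j : Fin (r - 1),
      S i j = (-1 : ℂ) ^ ((i : ℕ) + (j : ℕ)) *
        qint A ((((i : ℕ) + 1) * ((j : ℕ) + 1) : ℕ))) :
    (∀ i j : Fin (r - 1), S (Fin.rev i) j = S i j) ∧ S.det = 0 :=
  smatrix_singular_odd_general r hr hodd A hA S hS
end

section
/- Let A be a primitive 4r-th root of unity with r ≥ 3 and d = -A^2 - A^{-2}. Then Δ_n(d) ≠ 0 for 0 ≤ n ≤ r-2 and Δ_{r-1}(d) = 0. -/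
open Polynomial

/-! Writing `d = q + q⁻¹` with `q = -A²`, one has `Δ_n(d) (q - q⁻¹) = q^(n+1) - q^-(n+1)`. Since
`q² = A⁴ ≠ 1`, `Δ_n(d)` vanishes exactly when `q^(2(n+1)) = A^(4(n+1)) = 1`, i.e. when `r ∣ n + 1`;
the first such `n` is `r - 1`. -/

theorem cheb_eval_add_mul_sub {x y : ℂ} (hxy : x * y = 1) (n : ℕ) :
    (cheb n).eval (x + y) * (x - y) = x ^ (n + 1) - y ^ (n + 1) := by
  induction n using Nat.twoStepInduction with
  | zero => simp [cheb]
  | one => simp only [cheb, eval_X]; ring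
  | more n ih₀ ih₁ =>
    simp only [cheb, eval_sub, eval_mul, eval_X]
    linear_combination (x + y) * ih₁ - ih₀ + (x ^ (n + 1) - y ^ (n + 1)) * hxy

theorem cheb_eval_add_eq_zero_iff {x y : ℂ} (hxy : x * y = 1) (hx : x ^ 2 ≠ 1) (n : ℕ) :
    (cheb n).eval (x + y) = 0 ↔ x ^ (2 * (n + 1)) = 1 := by
  have hsub : x - y ≠ 0 := fun h ↦ hx (by rw [sq, ← hxy, sub_eq_zero.mp h])
  have hpow : x ^ (n + 1) ≠ 0 := pow_ne_zero _ (left_ne_zero_of_mul_eq_one hxy)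
  have hyx : y ^ (n + 1) * x ^ (n + 1) = 1 := by rw [← mul_pow, mul_comm, hxy, one_pow]
  rw [← mul_left_inj' hsub, zero_mul, cheb_eval_add_mul_sub hxy, sub_eq_zero,
    ← mul_left_inj' hpow, hyx, ← pow_add, two_mul]

theorem cheb_eval_eq_zero_iff_dvd {r : ℕ} (hr : 2 ≤ r) {A : ℂ} (hA : IsPrimitiveRoot A (4 * r))
    (n : ℕ) : (cheb n).eval (-A ^ (2 : ℤ) - A ^ (-2 : ℤ)) = 0 ↔ r ∣ n + 1 := by
  have hA2 : A ^ 2 ≠ 0 := pow_ne_zero _ (hA.ne_zero (by omega))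
  have hxy : -A ^ 2 * -(A ^ 2)⁻¹ = 1 := by rw [neg_mul_neg, mul_inv_cancel₀ hA2]
  have hpow_eq_one (m : ℕ) : (-A ^ 2) ^ (2 * m) = 1 ↔ r ∣ m := by
    rw [pow_mul, neg_sq, ← pow_mul, ← pow_mul, ← mul_assoc, show 2 * 2 = 4 from rfl,
      hA.pow_eq_one_iff_dvd, Nat.mul_dvd_mul_iff_left (by norm_num)]
  have hsq : (-A ^ 2) ^ 2 ≠ 1 := by
    simpa only [mul_one] using (hpow_eq_one 1).not.mpr (by rw [Nat.dvd_one]; omega)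
  rw [zpow_neg, zpow_ofNat, sub_eq_add_neg, cheb_eval_add_eq_zero_iff hxy hsq, hpow_eq_one]

theorem cheb_vanishing_primitive_4r (r : ℕ) (hr : 3 ≤ r) (A : ℂ)
    (hA : IsPrimitiveRoot A (4 * r)) (d : ℂ)
    (hd : d = -A ^ (2 : ℤ) - A ^ (-2 : ℤ)) :
    (∀ n : ℕ, n ≤ r - 2 → (cheb n).eval d ≠ 0) ∧ (cheb (r - 1)).eval d = 0 := by
  have hzero (n : ℕ) : (cheb n).eval d = 0 ↔ r ∣ n + 1 :=
    hd ▸ cheb_eval_eq_zero_iff_dvd (by omega) hA n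
  refine ⟨fun n hn h ↦ ?_, (hzero _).mpr ⟨1, by omega⟩⟩
  have := Nat.le_of_dvd n.succ_pos ((hzero n).mp h)
  omega
end
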